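/- Let K be a commutative ring, B an n×m matrix and D an m×n matrix over K, and let 0 ≤ i ≤ k ≤ n ≤ m. Then Σ_{X ⊆ [n], |X| = k} Σ_{S ⊆ [m], |S| = k} Σ_{W ⊆ X, |W| = k−i} Σ_{Z ⊆ S, |Z| = k−i} det(D_{Z,W}) · det(B_{W,Z}) = binom(n−k+i, i) · binom(m−k+i, i) · [B·D]^{(k−i)}, where the binomial coefficients denote the images of these natural numbers in K. -/

import Mathlib

/-- `[M]^(j)`: the sum of all principal `j × j` minors of `M`. -/
noncomputable def principalMinorSum {K : Type*} [CommRing K] {n : ℕ}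
    (M : Matrix (Fin n) (Fin n) K) (j : ℕ) : K :=
  ∑ T : {t : Finset (Fin n) // t.card = j},
    (M.submatrix (T.1.orderEmbOfFin T.2) (T.1.orderEmbOfFin T.2)).det

/-!
Exchanging the order of summation, a pair `(W, Z)` of `(k - i)`-subsets of `[n]` and `[m]` is
counted once for each `k`-set `X ⊇ W` and each `k`-set `S ⊇ Z`, that is
`binom(n - k + i, i) * binom(m - k + i, i)` times. What is left, `∑ W, ∑ Z, det D_{Z,W} det B_{W,Z}`,
is `∑ W, det (BD)_{W,W}` by the Cauchy–Binet formula applied to `B_{W,*} * D_{*,W}`.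

Cauchy–Binet itself: expanding `det (A * C)` by multilinearity in the rows gives a sum over all
maps `f` of `(∏ x, A x (f x)) * det C_{f,*}`; the non-injective `f` contribute nothing, and an
injective `f` factors uniquely as the increasing enumeration of its image composed with a
permutation `σ`, whose sign is absorbed into `det A_{*,Z}`.
-/

open Finset Matrix Equiv Function

section CauchyBinet

variable {R : Type*} [CommRing R]

theorem Matrix.det_mul_eq_sum_prod_mul_det_submatrix {κ ι : Type*} [Fintype κ] [DecidableEq κ]
    [Fintype ι] [DecidableEq ι] (A : Matrix κ ι R) (C : Matrix ι κ R) :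
    (A * C).det = ∑ f : κ → ι, (∏ x, A x (f x)) * (C.submatrix f id).det := by
  have hrows : A * C = Matrix.of fun p => ∑ x, A p x • C x := by
    ext p q
    simp [Matrix.mul_apply]
  rw [hrows]
  exact (detRowAlternating.toMultilinearMap.map_sum fun p x => A p x • C x).trans
    (sum_congr rfl fun f _ => detRowAlternating.toMultilinearMap.map_smul_univ _ _)

theorem Matrix.det_submatrix_eq_zero_of_not_injective {κ ι μ : Type*} [Fintype κ]
    [DecidableEq κ] (C : Matrix ι μ R) {f : κ → ι} (e : κ → μ) (hf : ¬Injective f) :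
    (C.submatrix f e).det = 0 := by
  obtain ⟨a, b, hab, hne⟩ := not_injective_iff.mp hf
  exact det_zero_of_row_eq hne (funext fun q => by simp [hab])

variable {ι : Type*} [LinearOrder ι] {j : ℕ}

theorem Function.Injective.exists_orderEmbOfFin_comp_perm_eq [DecidableEq ι] {f : Fin j → ι}
    (hf : Injective f) :
    ∃ (h : (univ.image f).card = j) (σ : Perm (Fin j)),
      (univ.image f).orderEmbOfFin h ∘ σ = f := by
  have h : (univ.image f).card = j := by simp [card_image_of_injective _ hf]
  have hsorted : f ∘ Tuple.sort f = (univ.image f).orderEmbOfFin h :=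
    orderEmbOfFin_unique h (fun x => mem_image_of_mem f (mem_univ _))
      ((Tuple.monotone_sort f).strictMono_of_injective (hf.comp (Tuple.sort f).injective))
  exact ⟨h, (Tuple.sort f).symm, by rw [← hsorted]; ext x; simp⟩

theorem sum_injective_eq_sum_sum_orderEmbOfFin_comp_perm [Fintype ι] {M : Type*}
    [AddCommMonoid M] (g : (Fin j → ι) → M) :
    ∑ f with Injective f, g f =
      ∑ Z : {z : Finset ι // z.card = j}, ∑ σ : Perm (Fin j), g (Z.1.orderEmbOfFin Z.2 ∘ σ) := by
  classical
  rw [← Fintype.sum_prod_type']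
  symm
  refine sum_bij (fun p _ => p.1.1.orderEmbOfFin p.1.2 ∘ p.2) ?_ ?_ ?_ fun _ _ => rfl
  · intro p _
    simpa using (p.1.1.orderEmbOfFin p.1.2).injective.comp p.2.injective
  · rintro ⟨⟨Z, hZ⟩, σ⟩ - ⟨⟨Z', hZ'⟩, σ'⟩ - h
    have hrange : ∀ {z : Finset ι} (hz : z.card = j) (τ : Perm (Fin j)),
        Set.range (z.orderEmbOfFin hz ∘ τ) = z := fun hz τ => by
      rw [τ.surjective.range_comp, range_orderEmbOfFin]
    obtain rfl : Z = Z' := by simpa [hrange] using congrArg Set.range h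
    exact Prod.ext rfl (Equiv.ext fun x => (Z.orderEmbOfFin hZ).injective (congrFun h x))
  · intro f hf
    obtain ⟨h, σ, hσ⟩ := (mem_filter.mp hf).2.exists_orderEmbOfFin_comp_perm_eq
    exact ⟨(⟨_, h⟩, σ), mem_univ _, hσ⟩

theorem Matrix.det_mul_eq_sum_det_submatrix_mul_det_submatrix [Fintype ι]
    (A : Matrix (Fin j) ι R) (C : Matrix ι (Fin j) R) :
    (A * C).det = ∑ Z : {z : Finset ι // z.card = j},
      (A.submatrix id (Z.1.orderEmbOfFin Z.2)).det *
        (C.submatrix (Z.1.orderEmbOfFin Z.2) id).det := by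
  classical
  have hinj : ∀ f : Fin j → ι, (∏ x, A x (f x)) * (C.submatrix f id).det ≠ 0 → Injective f :=
    fun f hf => not_not.mp fun hf' => hf <| by
      rw [det_submatrix_eq_zero_of_not_injective C id hf', mul_zero]
  rw [det_mul_eq_sum_prod_mul_det_submatrix, ← sum_filter_of_ne fun f _ => hinj f,
    sum_injective_eq_sum_sum_orderEmbOfFin_comp_perm]
  refine sum_congr rfl fun Z _ => ?_
  set e := Z.1.orderEmbOfFin Z.2
  calc ∑ σ : Perm (Fin j), (∏ x, A x (e (σ x))) * (C.submatrix (e ∘ σ) id).det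
      = ∑ σ : Perm (Fin j), (Perm.sign σ * ∏ x, A x (e (σ x))) * (C.submatrix e id).det := by
        refine sum_congr rfl fun σ _ => ?_
        rw [show C.submatrix (e ∘ σ) id = (C.submatrix e id).submatrix σ id from rfl,
          det_permute]
        ring
    _ = (A.submatrix id e).det * (C.submatrix e id).det := by
        rw [← sum_mul, ← det_transpose (A.submatrix id e), det_apply' (A.submatrix id e)ᵀ]
        rfl

end CauchyBinet

section DoubleCounting

variable {α : Type*} [Fintype α] [DecidableEq α]

theorem Fintype.card_subtype_card_eq_and_subset {W : Finset α} {k : ℕ} (hW : W.card ≤ k) :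
    Fintype.card {s : Finset α // s.card = k ∧ W ⊆ s} =
      (Fintype.card α - W.card).choose (k - W.card) := by
  rw [Fintype.card_subtype, ← card_univ,
    ← card_filter_powersetCard_subset W univ k (subset_univ W) hW, powersetCard_eq_filter,
    powerset_univ, filter_filter]

theorem sum_sum_subset_eq_choose_nsmul {M : Type*} [AddCommMonoid M] {r k : ℕ} (hrk : r ≤ k)
    (g : {w : Finset α // w.card = r} → M) :
    ∑ X : {s : Finset α // s.card = k}, ∑ W : {w // w ⊆ X.1 ∧ w.card = r}, g ⟨W.1, W.2.2⟩ =
      (Fintype.card α - r).choose (k - r) • ∑ W, g W := by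
  let swap : (Σ X : {s : Finset α // s.card = k}, {w // w ⊆ X.1 ∧ w.card = r}) ≃
      Σ W : {w : Finset α // w.card = r}, {s : Finset α // s.card = k ∧ W.1 ⊆ s} :=
    { toFun := fun p => ⟨⟨p.2.1, p.2.2.2⟩, ⟨p.1.1, p.1.2, p.2.2.1⟩⟩
      invFun := fun p => ⟨⟨p.2.1, p.2.2.1⟩, ⟨p.1.1, p.2.2.2, p.1.2⟩⟩
      left_inv := fun _ => rfl
      right_inv := fun _ => rfl }
  refine (Fintype.sum_sigma fun p => g (swap p).1).symm.trans ?_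
  rw [Fintype.sum_equiv swap _ (fun p => g p.1) fun _ => rfl, Fintype.sum_sigma, smul_sum]
  refine sum_congr rfl fun W _ => ?_
  dsimp only
  rw [sum_const, card_univ, Fintype.card_subtype_card_eq_and_subset (W.2.trans_le hrk), W.2]

end DoubleCounting

theorem principalMinorSum_mul {R ι : Type*} [CommRing R] [Fintype ι] [LinearOrder ι] {n : ℕ}
    (B : Matrix (Fin n) ι R) (D : Matrix ι (Fin n) R) (r : ℕ) :
    principalMinorSum (B * D) r =
      ∑ W : {w : Finset (Fin n) // w.card = r}, ∑ Z : {z : Finset ι // z.card = r},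
        (D.submatrix (Z.1.orderEmbOfFin Z.2) (W.1.orderEmbOfFin W.2)).det *
          (B.submatrix (W.1.orderEmbOfFin W.2) (Z.1.orderEmbOfFin Z.2)).det := by
  refine sum_congr rfl fun W _ => ?_
  rw [submatrix_mul _ _ _ id _ bijective_id, det_mul_eq_sum_det_submatrix_mul_det_submatrix]
  simp only [submatrix_submatrix, comp_id, id_comp, mul_comm]

theorem sum_det_mul_det_subsets
    {K : Type*} [CommRing K] {n m : ℕ}
    (B : Matrix (Fin n) (Fin m) K) (D : Matrix (Fin m) (Fin n) K)
    (i k : ℕ) (hik : i ≤ k) (hkn : k ≤ n) (hnm : n ≤ m) :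
    (∑ X : {s : Finset (Fin n) // s.card = k},
      ∑ S : {s : Finset (Fin m) // s.card = k},
        ∑ W : {w : Finset (Fin n) // w ⊆ X.1 ∧ w.card = k - i},
          ∑ Z : {z : Finset (Fin m) // z ⊆ S.1 ∧ z.card = k - i},
            (D.submatrix (Z.1.orderEmbOfFin Z.2.2) (W.1.orderEmbOfFin W.2.2)).det *
              (B.submatrix (W.1.orderEmbOfFin W.2.2) (Z.1.orderEmbOfFin Z.2.2)).det)
      = ((n - k + i).choose i : ℕ) * ((m - k + i).choose i : ℕ) *
          principalMinorSum (B * D) (k - i) := by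
  have hn : (Fintype.card (Fin n) - (k - i)).choose (k - (k - i)) = (n - k + i).choose i := by
    rw [Fintype.card_fin, show n - (k - i) = n - k + i by omega, show k - (k - i) = i by omega]
  have hm : (Fintype.card (Fin m) - (k - i)).choose (k - (k - i)) = (m - k + i).choose i := by
    rw [Fintype.card_fin, show m - (k - i) = m - k + i by omega, show k - (k - i) = i by omega]
  let t (W : {w : Finset (Fin n) // w.card = k - i}) (Z : {z : Finset (Fin m) // z.card = k - i}) :
      K :=
    (D.submatrix (Z.1.orderEmbOfFin Z.2) (W.1.orderEmbOfFin W.2)).det *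
      (B.submatrix (W.1.orderEmbOfFin W.2) (Z.1.orderEmbOfFin Z.2)).det
  calc _ = ∑ X : {s : Finset (Fin n) // s.card = k}, ∑ W : {w // w ⊆ X.1 ∧ w.card = k - i},
          ∑ S : {s : Finset (Fin m) // s.card = k}, ∑ Z : {z // z ⊆ S.1 ∧ z.card = k - i},
            t ⟨W.1, W.2.2⟩ ⟨Z.1, Z.2.2⟩ := sum_congr rfl fun _ _ => sum_comm
    _ = ∑ X : {s : Finset (Fin n) // s.card = k}, ∑ W : {w // w ⊆ X.1 ∧ w.card = k - i},
          (m - k + i).choose i • ∑ Z, t ⟨W.1, W.2.2⟩ Z := by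
        rw [← hm]
        exact sum_congr rfl fun _ _ => sum_congr rfl fun W _ =>
          sum_sum_subset_eq_choose_nsmul (Nat.sub_le k i) (t ⟨W.1, W.2.2⟩)
    _ = (n - k + i).choose i • ∑ W, (m - k + i).choose i • ∑ Z, t W Z := by
        rw [← hn]
        exact sum_sum_subset_eq_choose_nsmul (Nat.sub_le k i) fun W =>
          (m - k + i).choose i • ∑ Z, t W Z
    _ = _ := by
        simp only [principalMinorSum_mul, smul_sum, mul_sum, nsmul_eq_mul, mul_assoc, t]
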